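/- In Schein's axiom system for inverse semigroups, the identity (x·y)' = y'·x' is a consequence of the other four identities: associativity, x'' = x, x·x'·x = x, and (x·x')·(y'·y) = (y'·y)·(x·x'). -/

import Mathlib

/-!
Both `i (x * y)` and `i y * i x` are inverses of `x * y` in the sense of regular semigroups
(`a b a = a`, `b a b = b`); for the second this uses that `y * i y` and `i x * x` commute.
An idempotent `e` satisfies `i e = e`, so `e = e * i e = i e * e` and the last axiom makes any two
idempotents commute. In a semigroup whose idempotents commute, inverses are unique.
-/

section SemigroupInverse

variable {S : Type*} [Semigroup S]

structure IsSemigroupInverse (a b : S) : Prop where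
  left : a * b * a = a
  right : b * a * b = b

namespace IsSemigroupInverse

variable {a b c : S}

theorem symm (h : IsSemigroupInverse a b) : IsSemigroupInverse b a :=
  ⟨h.right, h.left⟩

theorem isIdempotentElem_mul (h : IsSemigroupInverse a b) : IsIdempotentElem (a * b) := by
  rw [IsIdempotentElem, ← mul_assoc, h.left]

theorem unique (hE : ∀ e f : S, IsIdempotentElem e → IsIdempotentElem f → Commute e f)
    (hb : IsSemigroupInverse a b) (hc : IsSemigroupInverse a c) : b = c :=
  calc b = b * a * b := hb.right.symm
    _ = b * (a * c * a) * b := by rw [hc.left]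
    _ = (b * a) * (c * a) * b := by simp only [mul_assoc]
    _ = (c * a) * (b * a) * b :=
        by rw [(hE _ _ hb.symm.isIdempotentElem_mul hc.symm.isIdempotentElem_mul).eq]
    _ = c * a * (b * a * b) := by simp only [mul_assoc]
    _ = c * a * b := by rw [hb.right]
    _ = (c * a * c) * a * b := by rw [hc.right]
    _ = c * ((a * c) * (a * b)) := by simp only [mul_assoc]
    _ = c * ((a * b) * (a * c)) :=
        by rw [(hE _ _ hc.isIdempotentElem_mul hb.isIdempotentElem_mul).eq]
    _ = c * (a * b * a) * c := by simp only [mul_assoc]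
    _ = c := by rw [hb.left, hc.right]

theorem mul {x x' y y' : S} (hx : IsSemigroupInverse x x') (hy : IsSemigroupInverse y y')
    (hcomm : Commute (y * y') (x' * x)) : IsSemigroupInverse (x * y) (y' * x') where
  left :=
    calc x * y * (y' * x') * (x * y) = x * ((y * y') * (x' * x)) * y := by simp only [mul_assoc]
      _ = x * ((x' * x) * (y * y')) * y := by rw [hcomm.eq]
      _ = (x * x' * x) * (y * y' * y) := by simp only [mul_assoc]
      _ = x * y := by rw [hx.left, hy.left]
  right :=
    calc y' * x' * (x * y) * (y' * x') = y' * ((x' * x) * (y * y')) * x' := by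
          simp only [mul_assoc]
      _ = y' * ((y * y') * (x' * x)) * x' := by rw [hcomm.eq]
      _ = (y' * y * y') * (x' * x * x') := by simp only [mul_assoc]
      _ = y' * x' := by rw [hx.right, hy.right]

end IsSemigroupInverse

variable {i : S → S}

theorem isSemigroupInverse_self_apply (h1 : ∀ x, i (i x) = x) (h2 : ∀ x, x * i x * x = x)
    (x : S) : IsSemigroupInverse x (i x) where
  left := h2 x
  right := by simpa only [h1] using h2 (i x)

theorem apply_eq_self_of_isIdempotentElem (h1 : ∀ x, i (i x) = x) (h2 : ∀ x, x * i x * x = x)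
    (h3 : ∀ x y : S, x * i x * (i y * y) = i y * y * (x * i x)) {e : S}
    (he : IsIdempotentElem e) : i e = e :=
  calc i e = i e * e * i e := ((isSemigroupInverse_self_apply h1 h2 e).right).symm
    _ = i e * (e * e) * i e := by rw [he.eq]
    _ = (i e * e) * (e * i e) := by simp only [mul_assoc]
    _ = (e * i e) * (i e * e) := (h3 e e).symm
    _ = (e * e) * i e * (i e * (e * e)) := by rw [he.eq]
    _ = e * ((e * i e) * (i e * e)) * e := by simp only [mul_assoc]
    _ = e * ((i e * e) * (e * i e)) * e := by rw [h3 e e]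
    _ = (e * i e * e) * (e * i e * e) := by simp only [mul_assoc]
    _ = e := by rw [h2, he.eq]

theorem commute_of_isIdempotentElem (h1 : ∀ x, i (i x) = x) (h2 : ∀ x, x * i x * x = x)
    (h3 : ∀ x y : S, x * i x * (i y * y) = i y * y * (x * i x)) {e f : S}
    (he : IsIdempotentElem e) (hf : IsIdempotentElem f) : Commute e f := by
  have he' : e * i e = e := by rw [apply_eq_self_of_isIdempotentElem h1 h2 h3 he, he.eq]
  have hf' : i f * f = f := by rw [apply_eq_self_of_isIdempotentElem h1 h2 h3 hf, hf.eq]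
  have := h3 e f
  rwa [he', hf'] at this

end SemigroupInverse

theorem schein_antiautomorphism {S : Type*} [Semigroup S] (i : S → S)
    (h1 : ∀ x : S, i (i x) = x)
    (h2 : ∀ x : S, x * i x * x = x)
    (h3 : ∀ x y : S, x * i x * (i y * y) = i y * y * (x * i x)) :
    ∀ x y : S, i (x * y) = i y * i x := by
  intro x y
  have hinv := isSemigroupInverse_self_apply h1 h2
  exact (hinv (x * y)).unique (fun _ _ => commute_of_isIdempotentElem h1 h2 h3)
    ((hinv x).mul (hinv y) (h3 y x))
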